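/- Let K be a compact convex set with closed extreme boundary ∂ₑK, embedded in C(∂ₑK) via restriction. If every positive linear functional in the unit sphere of A(K)* has a unique positive norm-preserving extension to C(∂ₑK), then K is a Choquet simplex: every point of K is the resultant (barycenter) of a unique maximal probability measure on K. -/

import Mathlib

/-!
Restriction to the closed set `∂ₑK` maps `C(K)` onto `C(∂ₑK)` (Tietze), so a positive functional
on `C(K)` that kills every function vanishing on `∂ₑK`, i.e. a maximal measure, is `μ ∘ restrict`
for a unique positive functional `μ` on `C(∂ₑK)`. Since a positive functional on `C(X)` has norm
equal to its value at `1`, the maximal probability measures with resultant `x` then correspond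
exactly to the positive norm-one extensions of evaluation at `x` from `A(K)` to `C(∂ₑK)`, of which
there is exactly one by hypothesis.
-/

open NormedSpace ContinuousMap

/-- A continuous function on `K` is affine if it preserves convex combinations. -/
def IsAffineOn {E : Type*} [AddCommGroup E] [Module ℝ E] [TopologicalSpace E]
    (K : Set E) (a : C(K, ℝ)) : Prop :=
  ∀ (x y : K) (t : ℝ), 0 ≤ t → t ≤ 1 →
    ∀ h : t • (x : E) + (1 - t) • (y : E) ∈ K,
      a ⟨t • (x : E) + (1 - t) • (y : E), h⟩ = t * a x + (1 - t) * a y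

/-- `A(K)`, the affine continuous real functions on `K`, as a subspace of `C(K, ℝ)`. -/
def affineFns {E : Type*} [AddCommGroup E] [Module ℝ E] [TopologicalSpace E]
    (K : Set E) : Submodule ℝ C(K, ℝ) where
  carrier := {a | IsAffineOn K a}
  add_mem' := by
    intro a b ha hb x y t ht ht' h
    simp only [ContinuousMap.add_apply, ha x y t ht ht' h, hb x y t ht ht' h]; ring
  zero_mem' := by intro x y t ht ht' h; simp
  smul_mem' := by
    intro c a ha x y t ht ht' h
    simp only [ContinuousMap.smul_apply, ha x y t ht ht' h, smul_eq_mul]; ring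

theorem one_mem_affineFns {E : Type*} [AddCommGroup E] [Module ℝ E] [TopologicalSpace E]
    (K : Set E) : (1 : C(K, ℝ)) ∈ affineFns K := by
  intro x y t ht ht' h
  simp only [ContinuousMap.one_apply]; ring


namespace NormedSpace

/-- The topological dual of a seminormed space `E` (the former Mathlib `NormedSpace.Dual`). -/
def Dual (𝕜 : Type*) [RCLike 𝕜] (E : Type*) [SeminormedAddCommGroup E] [NormedSpace 𝕜 E] :
    Type _ :=
  E →L[𝕜] 𝕜

noncomputable instance (𝕜 : Type*) [RCLike 𝕜] (E : Type*) [SeminormedAddCommGroup E] [NormedSpace 𝕜 E] :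
    SeminormedAddCommGroup (Dual 𝕜 E) :=
  inferInstanceAs (SeminormedAddCommGroup (E →L[𝕜] 𝕜))

noncomputable instance (𝕜 : Type*) [RCLike 𝕜] (E : Type*) [SeminormedAddCommGroup E] [NormedSpace 𝕜 E] :
    NormedSpace 𝕜 (Dual 𝕜 E) :=
  inferInstanceAs (NormedSpace 𝕜 (E →L[𝕜] 𝕜))

instance (𝕜 : Type*) [RCLike 𝕜] (E : Type*) [SeminormedAddCommGroup E] [NormedSpace 𝕜 E] :
    FunLike (Dual 𝕜 E) E 𝕜 :=
  inferInstanceAs (FunLike (E →L[𝕜] 𝕜) E 𝕜)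

end NormedSpace

/-- Restriction of a continuous function on `K` to the set of extreme points of `K`. -/
def restrictExt {E : Type*} [AddCommGroup E] [Module ℝ E] [TopologicalSpace E]
    (K : Set E) (a : C(K, ℝ)) : C(Set.extremePoints ℝ K, ℝ) :=
  a.comp ⟨Set.inclusion extremePoints_subset,
    continuous_inclusion extremePoints_subset⟩

namespace ContinuousMap

variable {X Y : Type*} [TopologicalSpace X] [TopologicalSpace Y]

noncomputable def compRightL [CompactSpace X] [CompactSpace Y] (e : C(Y, X)) :
    C(X, ℝ) →L[ℝ] C(Y, ℝ) where
  toLinearMap := (compRightAlgHom ℝ ℝ e).toLinearMap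
  cont := compRightAlgHom_continuous ℝ ℝ e

theorem abs_apply_le_apply_one_mul_norm [CompactSpace X] (φ : C(X, ℝ) →ₗ[ℝ] ℝ)
    (hφ : ∀ f, 0 ≤ f → 0 ≤ φ f) (f : C(X, ℝ)) : |φ f| ≤ φ 1 * ‖f‖ := by
  have hf : ∀ x, |f x| ≤ ‖f‖ := fun x => by simpa using f.norm_coe_le_norm x
  have hupper : 0 ≤ φ (‖f‖ • 1 - f) := hφ _ fun x => by simpa using (abs_le.1 (hf x)).2
  have hlower : 0 ≤ φ (‖f‖ • 1 + f) := hφ _ fun x => by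
    simpa [neg_le_iff_add_nonneg'] using (abs_le.1 (hf x)).1
  rw [map_sub, map_smul, smul_eq_mul] at hupper
  rw [map_add, map_smul, smul_eq_mul] at hlower
  rw [abs_le]
  constructor <;> linarith

theorem norm_eq_apply_one_of_nonneg [CompactSpace X] (φ : C(X, ℝ) →L[ℝ] ℝ)
    (hφ : ∀ f, 0 ≤ f → 0 ≤ φ f) : ‖φ‖ = φ 1 := by
  refine le_antisymm (φ.opNorm_le_bound (hφ 1 zero_le_one) fun f => ?_) ?_
  · exact abs_apply_le_apply_one_mul_norm φ.toLinearMap hφ f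
  · calc φ 1 ≤ ‖φ 1‖ := le_abs_self _
      _ ≤ ‖φ‖ * ‖(1 : C(X, ℝ))‖ := φ.le_opNorm 1
      _ ≤ ‖φ‖ :=
        mul_le_of_le_one_right (norm_nonneg φ) ((norm_le _ zero_le_one).2 fun _ => by simp)

theorem norm_eq_one_of_forall_apply_eq_eval [CompactSpace X] {A : Submodule ℝ C(X, ℝ)}
    (hA : 1 ∈ A) (x : X) (Λ : Dual ℝ A) (hΛ : ∀ a : A, Λ a = (a : C(X, ℝ)) x) : ‖Λ‖ = 1 := by
  refine le_antisymm (ContinuousLinearMap.opNorm_le_bound _ zero_le_one fun a => ?_) ?_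
  · calc ‖Λ a‖ = ‖(a : C(X, ℝ)) x‖ := congrArg norm (hΛ a)
      _ ≤ 1 * ‖a‖ := by simpa using (a : C(X, ℝ)).norm_coe_le_norm x
  · have : Nonempty X := ⟨x⟩
    calc (1 : ℝ) = ‖Λ ⟨1, hA⟩‖ := by rw [hΛ]; simp
      _ ≤ ‖Λ‖ * ‖(1 : C(X, ℝ))‖ := Λ.le_opNorm ⟨1, hA⟩
      _ = ‖Λ‖ := by rw [norm_one, mul_one]

theorem exists_nonneg_comp_compRightL_eq [CompactSpace X] [T2Space X] [CompactSpace Y]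
    {e : C(Y, X)} (he : Topology.IsClosedEmbedding e) (φ : C(X, ℝ) →L[ℝ] ℝ)
    (hφ : ∀ f, 0 ≤ f → 0 ≤ φ f) (hker : ∀ f, f.comp e = 0 → φ f = 0) :
    ∃ ψ : C(Y, ℝ) →L[ℝ] ℝ, (∀ g, 0 ≤ g → 0 ≤ ψ g) ∧ ψ.comp (compRightL e) = φ := by
  obtain ⟨S, hRS⟩ := (compRightL e).toLinearMap.exists_rightInverse_of_surjective <|
    LinearMap.range_eq_top.2 fun g => (g.exists_extension he).imp fun f hf => hf
  have hS : ∀ g, (S g).comp e = g := LinearMap.congr_fun hRS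
  have hφ_eq : ∀ f f', f.comp e = f'.comp e → φ f = φ f' := fun f f' h => by
    rw [← sub_eq_zero, ← map_sub]
    exact hker _ (by ext y; simpa [sub_eq_zero] using congr($h y))
  let ψ := φ.toLinearMap ∘ₗ S
  have hψ : ∀ g, 0 ≤ g → 0 ≤ ψ g := fun g hg => by
    have : ψ g = φ (S g ⊔ 0) := hφ_eq _ _ <| by
      ext y
      have hy : (S g) (e y) = g y := congr($(hS g) y)
      simpa [hy] using hg y
    exact this ▸ hφ _ le_sup_right
  refine ⟨ψ.mkContinuous (ψ 1) fun g => abs_apply_le_apply_one_mul_norm ψ hψ g, hψ, ?_⟩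
  ext f
  exact hφ_eq _ _ (hS _)

end ContinuousMap

theorem stmt_13_general {E : Type*} [AddCommGroup E] [Module ℝ E] [TopologicalSpace E]
    [T2Space E]
    (K : Set E) [CompactSpace K]
    [CompactSpace (Set.extremePoints ℝ K)]
    (hextcl : IsClosed (Set.extremePoints ℝ K))
    (hext : ∀ Λ : Dual ℝ (affineFns K), ‖Λ‖ = 1 →
      (∀ a : affineFns K, 0 ≤ (a : C(K, ℝ)) → 0 ≤ Λ a) →
      ∃! μ : Dual ℝ C(Set.extremePoints ℝ K, ℝ),
        (∀ a : affineFns K, μ (restrictExt K (a : C(K, ℝ))) = Λ a) ∧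
        ‖μ‖ = 1 ∧
        (∀ g : C(Set.extremePoints ℝ K, ℝ), 0 ≤ g → 0 ≤ μ g)) :
    ∀ x : K, ∃! μ : Dual ℝ C(K, ℝ),
      ‖μ‖ = 1 ∧ μ 1 = 1 ∧
      (∀ f : C(K, ℝ), 0 ≤ f → 0 ≤ μ f) ∧
      -- `μ` is maximal: it is supported on the (closed) extreme boundary of `K`
      (∀ f : C(K, ℝ), (∀ b : K, (b : E) ∈ Set.extremePoints ℝ K → f b = 0) → μ f = 0) ∧
      -- `x` is the resultant of `μ`
      (∀ a : affineFns K, μ (a : C(K, ℝ)) = (a : C(K, ℝ)) x) := by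
  intro x
  let e : C(Set.extremePoints ℝ K, K) := ⟨_, continuous_inclusion extremePoints_subset⟩
  have he : Topology.IsClosedEmbedding e :=
    .inclusion extremePoints_subset (hextcl.preimage continuous_subtype_val)
  let Λ : Dual ℝ (affineFns K) := (evalCLM ℝ x).comp (affineFns K).subtypeL
  obtain ⟨μ, ⟨hμΛ, -, hμpos⟩, huniq⟩ :=
    hext Λ (norm_eq_one_of_forall_apply_eq_eval (one_mem_affineFns K) x Λ fun _ => rfl)
      fun a ha => ha x
  have hμ1 : μ 1 = 1 := hμΛ ⟨1, one_mem_affineFns K⟩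
  have hμRpos : ∀ f, 0 ≤ f → 0 ≤ μ.comp (compRightL e) f := fun f hf => hμpos _ fun p => hf _
  refine ⟨μ.comp (compRightL e), ⟨?_, hμ1, hμRpos, fun f hf => ?_, hμΛ⟩, ?_⟩
  · exact (norm_eq_apply_one_of_nonneg _ hμRpos).trans hμ1
  · have hfe : f.comp e = 0 := by ext p; exact hf _ p.2
    exact (congrArg μ hfe).trans μ.map_zero
  · rintro ν ⟨-, hν1, hνpos, hνsupp, hνres⟩
    obtain ⟨μ', hμ'pos, hμ'ν⟩ := exists_nonneg_comp_compRightL_eq he ν hνpos fun f hf =>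
      hνsupp f fun b hb => congr($hf ⟨b, hb⟩)
    have hμ'ν' : ∀ f, μ' (f.comp e) = ν f := fun f => congr($hμ'ν f)
    have : μ' = μ := huniq μ' ⟨fun a => (hμ'ν' a).trans (hνres a),
      (norm_eq_apply_one_of_nonneg μ' hμ'pos).trans ((hμ'ν' 1).trans hν1), hμ'pos⟩
    rw [← hμ'ν, this]

/-- If every positive functional in the unit sphere of `A(K)*` has a unique positive
norm-preserving extension to `C(∂ₑK)*` (via the restriction embedding), then `K` is a
Choquet simplex: every point of `K` is represented by a unique maximal (i.e. supported on
the closed extreme boundary) probability measure, viewed as a positive state on `C(K)`. -/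
theorem stmt_13 {E : Type*} [AddCommGroup E] [Module ℝ E] [TopologicalSpace E]
    [IsTopologicalAddGroup E] [ContinuousSMul ℝ E] [T2Space E] [LocallyConvexSpace ℝ E]
    (K : Set E) [CompactSpace K] (hK : Convex ℝ K)
    [CompactSpace (Set.extremePoints ℝ K)]
    (hextcl : IsClosed (Set.extremePoints ℝ K))
    (hext : ∀ Λ : Dual ℝ (affineFns K), ‖Λ‖ = 1 →
      (∀ a : affineFns K, 0 ≤ (a : C(K, ℝ)) → 0 ≤ Λ a) →
      ∃! μ : Dual ℝ C(Set.extremePoints ℝ K, ℝ),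
        (∀ a : affineFns K, μ (restrictExt K (a : C(K, ℝ))) = Λ a) ∧
        ‖μ‖ = 1 ∧
        (∀ g : C(Set.extremePoints ℝ K, ℝ), 0 ≤ g → 0 ≤ μ g)) :
    ∀ x : K, ∃! μ : Dual ℝ C(K, ℝ),
      ‖μ‖ = 1 ∧ μ 1 = 1 ∧
      (∀ f : C(K, ℝ), 0 ≤ f → 0 ≤ μ f) ∧
      -- `μ` is maximal: it is supported on the (closed) extreme boundary of `K`
      (∀ f : C(K, ℝ), (∀ b : K, (b : E) ∈ Set.extremePoints ℝ K → f b = 0) → μ f = 0) ∧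
      -- `x` is the resultant of `μ`
      (∀ a : affineFns K, μ (a : C(K, ℝ)) = (a : C(K, ℝ)) x) :=
  stmt_13_general K hextcl hext
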